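/- arXiv:0710.2719 — 6 statements merged into one kernel-verified Lean document; each statement's English description precedes it below -/
import Mathlib

section
/- Let V be a real vector space with complex structures I₁, I₂, I₃, a skew map Q : V* → V, and skew maps F₁₂, F₂₃ : V → V* satisfying I₂ - I₁ = Q∘F₁₂, F₁₂∘I₂ + I₁*∘F₁₂ = 0, I₃ - I₂ = Q∘F₂₃, and F₂₃∘I₃ + I₂*∘F₂₃ = 0. Then F₁₃ := F₁₂ + F₂₃ satisfies I₃ - I₁ = Q∘F₁₃ and F₁₃∘I₃ + I₁*∘F₁₃ = 0. -/
/-!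
Writing `I₃ - I₁ = (I₃ - I₂) + (I₂ - I₁)` gives the first equation at once. For the second, the
two given intertwining relations leave the defect `F₁₂ (Q (F₂₃ x)) y - F₂₃ x (Q (F₁₂ y))`, which
vanishes because both `Q` and `F₁₂` are skew.
-/

open Module

section

variable {R M : Type*} [CommRing R] [AddCommGroup M] [Module R M]

/-- `F` is a morphism from `(I, Q)` to `(J, Q)` in the groupoid of Courant trivializations. -/
def IsTrivializationMorphism (Q : Dual R M →ₗ[R] M) (I J : M →ₗ[R] M)
    (F : M →ₗ[R] Dual R M) : Prop :=
  J - I = Q ∘ₗ F ∧ F ∘ₗ J + I.dualMap ∘ₗ F = 0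

lemma apply_skew_apply_comm {Q : Dual R M →ₗ[R] M} {F : M →ₗ[R] Dual R M}
    (hQ : ∀ ξ η : Dual R M, ξ (Q η) = -η (Q ξ)) (hF : ∀ x y : M, F x y = -F y x)
    (ξ : Dual R M) (y : M) : F (Q ξ) y = ξ (Q (F y)) := by
  rw [hF, hQ, neg_neg]

namespace IsTrivializationMorphism

variable {Q : Dual R M →ₗ[R] M} {I J : M →ₗ[R] M} {F : M →ₗ[R] Dual R M}

lemma sub_apply_eq (h : IsTrivializationMorphism Q I J F) (x : M) : J x - I x = Q (F x) :=
  congr($(h.1) x)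

lemma apply_apply_add_apply_apply (h : IsTrivializationMorphism Q I J F) (x y : M) :
    F (J x) y + F x (I y) = 0 :=
  congr($(h.2) x y)

lemma add {I₁ I₂ I₃ : M →ₗ[R] M} {F G : M →ₗ[R] Dual R M}
    (hQ : ∀ ξ η : Dual R M, ξ (Q η) = -η (Q ξ)) (hF : ∀ x y : M, F x y = -F y x)
    (h₁ : IsTrivializationMorphism Q I₁ I₂ F) (h₂ : IsTrivializationMorphism Q I₂ I₃ G) :
    IsTrivializationMorphism Q I₁ I₃ (F + G) := by
  refine ⟨?_, ?_⟩
  · rw [← sub_add_sub_cancel I₃ I₂ I₁, h₂.1, h₁.1, LinearMap.comp_add, add_comm]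
  · ext x y
    have hFJ : F (I₃ x) y = F (I₂ x) y + F (Q (G x)) y := by
      rw [← h₂.sub_apply_eq, map_sub, LinearMap.sub_apply, add_sub_cancel]
    have hGI : G x (I₁ y) = G x (I₂ y) - G x (Q (F y)) := by
      rw [← h₁.sub_apply_eq, map_sub, sub_sub_cancel]
    have h₁xy := h₁.apply_apply_add_apply_apply x y
    have h₂xy := h₂.apply_apply_add_apply_apply x y
    have cross := apply_skew_apply_comm hQ hF (G x) y
    simp only [LinearMap.add_comp, LinearMap.comp_add, LinearMap.add_apply,
      LinearMap.comp_apply, LinearMap.dualMap_apply, LinearMap.zero_apply]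
    linear_combination hFJ + hGI + h₁xy + h₂xy + cross

end IsTrivializationMorphism

end

theorem stmt1_general (V : Type*) [AddCommGroup V] [Module ℝ V]
    (I₁ I₂ I₃ : V →ₗ[ℝ] V) (Q : Module.Dual ℝ V →ₗ[ℝ] V)
    (F₁₂ F₂₃ : V →ₗ[ℝ] Module.Dual ℝ V)
    (hQ : ∀ ξ η : Module.Dual ℝ V, ξ (Q η) = - η (Q ξ))
    (hF₁₂ : ∀ x y : V, F₁₂ x y = - F₁₂ y x)
    (h12a : I₂ - I₁ = Q ∘ₗ F₁₂)
    (h12b : F₁₂ ∘ₗ I₂ + I₁.dualMap ∘ₗ F₁₂ = 0)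
    (h23a : I₃ - I₂ = Q ∘ₗ F₂₃)
    (h23b : F₂₃ ∘ₗ I₃ + I₂.dualMap ∘ₗ F₂₃ = 0) :
    I₃ - I₁ = Q ∘ₗ (F₁₂ + F₂₃) ∧
      (F₁₂ + F₂₃) ∘ₗ I₃ + I₁.dualMap ∘ₗ (F₁₂ + F₂₃) = 0 :=
  IsTrivializationMorphism.add hQ hF₁₂ ⟨h12a, h12b⟩ ⟨h23a, h23b⟩

/-- Morphisms in the groupoid of Courant trivializations compose by
addition of the 2-forms: if `(I₁,I₂,Q,F₁₂)` and `(I₂,I₃,Q,F₂₃)` satisfy the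
compatibility equations, then so does `(I₁,I₃,Q,F₁₂+F₂₃)`. -/
theorem stmt1 (V : Type*) [AddCommGroup V] [Module ℝ V] [FiniteDimensional ℝ V]
    (I₁ I₂ I₃ : V →ₗ[ℝ] V) (Q : Module.Dual ℝ V →ₗ[ℝ] V)
    (F₁₂ F₂₃ : V →ₗ[ℝ] Module.Dual ℝ V)
    (hI₁ : I₁ ∘ₗ I₁ = -LinearMap.id) (hI₂ : I₂ ∘ₗ I₂ = -LinearMap.id)
    (hI₃ : I₃ ∘ₗ I₃ = -LinearMap.id)
    (hQ : ∀ ξ η : Module.Dual ℝ V, ξ (Q η) = - η (Q ξ))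
    (hF₁₂ : ∀ x y : V, F₁₂ x y = - F₁₂ y x)
    (hF₂₃ : ∀ x y : V, F₂₃ x y = - F₂₃ y x)
    (h12a : I₂ - I₁ = Q ∘ₗ F₁₂)
    (h12b : F₁₂ ∘ₗ I₂ + I₁.dualMap ∘ₗ F₁₂ = 0)
    (h23a : I₃ - I₂ = Q ∘ₗ F₂₃)
    (h23b : F₂₃ ∘ₗ I₃ + I₂.dualMap ∘ₗ F₂₃ = 0) :
    I₃ - I₁ = Q ∘ₗ (F₁₂ + F₂₃) ∧
      (F₁₂ + F₂₃) ∘ₗ I₃ + I₁.dualMap ∘ₗ (F₁₂ + F₂₃) = 0 :=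
  stmt1_general V I₁ I₂ I₃ Q F₁₂ F₂₃ hQ hF₁₂ h12a h12b h23a h23b
end

section
/- Let V be a real vector space with complex structures I and J, skew Q : V* → V, and skew F : V → V* satisfying J - I = Q∘F and F∘J + I*∘F = 0. Then the map g := -(1/2)·F∘(I + J) : V → V* is symmetric, i.e. g* = g. -/
namespace LinearMap

variable {R M : Type*} [CommRing R] [AddCommGroup M] [Module R M]

theorem apply_apply_eq_of_comp_add_dualMap_comp_eq_zero {I J : M →ₗ[R] M}
    {F : M →ₗ[R] Module.Dual R M} (hF : ∀ x y : M, F x y = - F y x)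
    (h : F ∘ₗ J + I.dualMap ∘ₗ F = 0) (x y : M) : F (J x) y = F (I y) x := by
  have hxy : F (J x) y + F x (I y) = 0 := by
    simpa [dualMap_apply] using congr_fun₂ h x y
  rw [hF (I y)]
  linear_combination hxy

theorem isSymm_comp_add_of_comp_add_dualMap_comp_eq_zero {I J : M →ₗ[R] M}
    {F : M →ₗ[R] Module.Dual R M} (hF : ∀ x y : M, F x y = - F y x)
    (h : F ∘ₗ J + I.dualMap ∘ₗ F = 0) : BilinForm.IsSymm (F ∘ₗ (I + J)) := by
  refine ⟨fun x y => ?_⟩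
  simp only [comp_apply, add_apply, map_add,
    apply_apply_eq_of_comp_add_dualMap_comp_eq_zero hF h]
  ring

end LinearMap

theorem stmt2_general (V : Type*) [AddCommGroup V] [Module ℝ V]
    (I J : V →ₗ[ℝ] V) (F : V →ₗ[ℝ] Module.Dual ℝ V)
    (hF : ∀ x y : V, F x y = - F y x)
    (h2 : F ∘ₗ J + I.dualMap ∘ₗ F = 0) :
    ∀ x y : V, (-((2:ℝ)⁻¹) • (F ∘ₗ (I + J))) x y = (-((2:ℝ)⁻¹) • (F ∘ₗ (I + J))) y x :=
  ((LinearMap.isSymm_comp_add_of_comp_add_dualMap_comp_eq_zero hF h2).smul _).eq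

/-- Under the compatibility equations `J - I = Q∘F`, `F∘J + I*∘F = 0`,
the map `g := -(1/2)·F∘(I+J) : V → V*` is symmetric: `g x y = g y x`. -/
theorem stmt2 (V : Type*) [AddCommGroup V] [Module ℝ V] [FiniteDimensional ℝ V]
    (I J : V →ₗ[ℝ] V) (Q : Module.Dual ℝ V →ₗ[ℝ] V) (F : V →ₗ[ℝ] Module.Dual ℝ V)
    (hI : I ∘ₗ I = -LinearMap.id) (hJ : J ∘ₗ J = -LinearMap.id)
    (hQ : ∀ ξ η : Module.Dual ℝ V, ξ (Q η) = - η (Q ξ))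
    (hF : ∀ x y : V, F x y = - F y x)
    (h1 : J - I = Q ∘ₗ F)
    (h2 : F ∘ₗ J + I.dualMap ∘ₗ F = 0) :
    ∀ x y : V, (-((2:ℝ)⁻¹) • (F ∘ₗ (I + J))) x y = (-((2:ℝ)⁻¹) • (F ∘ₗ (I + J))) y x :=
  stmt2_general V I J F hF h2
end

section
/- Let V be a real vector space with complex structures I, J, skew F satisfying J - I = Q∘F and F∘J + I*∘F = 0 (Q skew), with g := -(1/2)F∘(I+J) positive definite (in particular F and I+J are invertible). Then the endomorphism 𝒥_A of V ⊕ V* defined blockwise as 𝒥_A(X + ξ) = -F⁻¹(ξ) + F(X) squares to -1 and is orthogonal for the natural split pairing, and it equals (1/2)·e^{b}∘(J-I, -(ω_J⁻¹+ω_I⁻¹); ω_J+ω_I, -(J*-I*))∘e^{-b}, where b = -(1/2)F(J-I), ω_I = gI, ω_J = gJ, and e^{b}(X+ξ) = X + ξ + b(X). -/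
/-!
Skewness of `F` turns the compatibility `F ∘ J = -I* ∘ F` into its mirror image
`F ∘ I = -J* ∘ F`, so `(J* - I*) ∘ F = F ∘ (J - I) = -2b`. From `F = ω_J + b ∘ J = ω_I - b ∘ I`
and the fact that `J ∘ ω_J⁻¹` and `I ∘ ω_I⁻¹` are both the inverse of `g`, one gets
`ω_J⁻¹ + ω_I⁻¹ = 2F⁻¹`; and `ω_J + ω_I + (J* - I*) ∘ b = -½ F ∘ ((I + J)² + (J - I)²) = 2F`
because `(I + J)² + (J - I)² = 2(I² + J²) = -4`. Multiplying out the block matrices of the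
`b`-field conjugation with these identities leaves exactly `2𝒥_A`.
-/

open LinearMap

section Ring

variable {R V : Type*} [CommRing R] [AddCommGroup V] [Module R V]
  {F : V →ₗ[R] Module.Dual R V} {I J : V →ₗ[R] V}

theorem apply_apply_eq_neg_of_comp_self_eq_neg (hJ : J ∘ₗ J = -LinearMap.id) (x : V) :
    J (J x) = -x :=
  congr($hJ x)

theorem comp_add_dualMap_comp_eq_zero_comm (hF : ∀ x y, F x y = -F y x)
    (h : F ∘ₗ J + I.dualMap ∘ₗ F = 0) : F ∘ₗ I + J.dualMap ∘ₗ F = 0 := by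
  ext x y
  have hyx : F (J y) x + F y (I x) = 0 := congr($h y x)
  simp only [LinearMap.add_apply, comp_apply, dualMap_apply, LinearMap.zero_apply]
  rw [hF (I x), hF x]
  linear_combination -hyx

theorem dualMap_sub_dualMap_comp (hF : ∀ x y, F x y = -F y x)
    (h : F ∘ₗ J + I.dualMap ∘ₗ F = 0) : (J.dualMap - I.dualMap) ∘ₗ F = F ∘ₗ (J - I) := by
  ext x y
  have hI : F (J x) y + F x (I y) = 0 := congr($h x y)
  have hJ : F (I x) y + F x (J y) = 0 := congr($(comp_add_dualMap_comp_eq_zero_comm hF h) x y)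
  simp only [sub_comp, LinearMap.sub_apply, comp_apply, dualMap_apply, comp_sub]
  linear_combination hJ - hI

theorem injective_of_pos_apply_self [PartialOrder R] {g : V →ₗ[R] Module.Dual R V}
    (hpos : ∀ x, x ≠ 0 → 0 < g x x) : Function.Injective g := by
  refine (injective_iff_map_eq_zero g).2 fun v hv => ?_
  by_contra hne
  simpa [hv] using hpos v hne

variable {g b : V →ₗ[R] Module.Dual R V} {Finv ωIinv ωJinv : Module.Dual R V →ₗ[R] V}

theorem add_eq_two_smul_of_rightInverse (hg : Function.Injective g)
    (hFJ : F = g ∘ₗ J + b ∘ₗ J) (hFI : F = g ∘ₗ I - b ∘ₗ I)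
    (hFinv₁ : ∀ x, Finv (F x) = x) (hFinv₂ : ∀ ξ, F (Finv ξ) = ξ)
    (hωJinv : ∀ ξ, g (J (ωJinv ξ)) = ξ) (hωIinv : ∀ ξ, g (I (ωIinv ξ)) = ξ) :
    ωJinv + ωIinv = (2 : R) • Finv := by
  ext ξ : 1
  have hJI : J (ωJinv ξ) = I (ωIinv ξ) := hg ((hωJinv ξ).trans (hωIinv ξ).symm)
  apply Function.LeftInverse.injective hFinv₁
  calc F (ωJinv ξ + ωIinv ξ)
      = (g (J (ωJinv ξ)) + b (J (ωJinv ξ))) + (g (I (ωIinv ξ)) - b (I (ωIinv ξ))) := by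
        rw [map_add, congr($hFJ (ωJinv ξ)), congr($hFI (ωIinv ξ))]; rfl
    _ = (2 : R) • ξ := by rw [hJI, hωIinv]; module
    _ = F ((2 : R) • Finv ξ) := by rw [map_smul, hFinv₂]

end Ring

section Field

variable {K V : Type*} [Field K] [CharZero K] [AddCommGroup V] [Module K V]
  {F g b : V →ₗ[K] Module.Dual K V} {I J : V →ₗ[K] V}

theorem eq_comp_add_comp_of_comp_self_eq_neg (hJ : J ∘ₗ J = -LinearMap.id)
    (hg : g = -(2⁻¹ : K) • (F ∘ₗ (I + J))) (hb : b = -(2⁻¹ : K) • (F ∘ₗ (J - I))) :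
    F = g ∘ₗ J + b ∘ₗ J := by
  ext x y
  simp only [hg, hb, LinearMap.add_apply, LinearMap.sub_apply, comp_apply, LinearMap.smul_apply,
    map_add, map_sub, apply_apply_eq_neg_of_comp_self_eq_neg hJ, map_neg, LinearMap.neg_apply,
    smul_eq_mul]
  ring

theorem eq_comp_sub_comp_of_comp_self_eq_neg (hI : I ∘ₗ I = -LinearMap.id)
    (hg : g = -(2⁻¹ : K) • (F ∘ₗ (I + J))) (hb : b = -(2⁻¹ : K) • (F ∘ₗ (J - I))) :
    F = g ∘ₗ I - b ∘ₗ I := by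
  ext x y
  simp only [hg, hb, LinearMap.add_apply, LinearMap.sub_apply, comp_apply, LinearMap.smul_apply,
    map_add, map_sub, apply_apply_eq_neg_of_comp_self_eq_neg hI, map_neg, LinearMap.neg_apply,
    smul_eq_mul]
  ring

variable (hF : ∀ x y, F x y = -F y x) (h : F ∘ₗ J + I.dualMap ∘ₗ F = 0)
  (hI : I ∘ₗ I = -LinearMap.id) (hJ : J ∘ₗ J = -LinearMap.id)
  (hg : g = -(2⁻¹ : K) • (F ∘ₗ (I + J))) (hb : b = -(2⁻¹ : K) • (F ∘ₗ (J - I)))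
include hF h hI hJ hg hb

theorem comp_add_comp_add_dualMap_sub_dualMap_comp :
    g ∘ₗ J + g ∘ₗ I + (J.dualMap - I.dualMap) ∘ₗ b = (2 : K) • F := by
  ext x y
  have hB := congr($(dualMap_sub_dualMap_comp hF h) ((J - I) x) y)
  simp only [hg, hb, LinearMap.add_apply, LinearMap.sub_apply, comp_apply, LinearMap.smul_apply,
    dualMap_apply, map_add, map_sub, apply_apply_eq_neg_of_comp_self_eq_neg hI,
    apply_apply_eq_neg_of_comp_self_eq_neg hJ, map_neg, LinearMap.neg_apply, smul_eq_mul] at hB ⊢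
  linear_combination (-2⁻¹ : K) * hB

theorem two_inv_smul_bTransform_conj_eq {Finv ωIinv ωJinv : Module.Dual K V →ₗ[K] V}
    (hFinv₁ : ∀ x, Finv (F x) = x) (hFinv₂ : ∀ ξ, F (Finv ξ) = ξ)
    (hsum : ωJinv + ωIinv = (2 : K) • Finv) (x : V) (ξ : Module.Dual K V) :
    (2⁻¹ : K) • ((J - I) x - (ωJinv + ωIinv) (ξ - b x),
      (g ∘ₗ J + g ∘ₗ I) x - (J.dualMap - I.dualMap) (ξ - b x)
        + b ((J - I) x - (ωJinv + ωIinv) (ξ - b x))) = (-Finv ξ, F x) := by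
  have hFinv_b : Finv (b x) = -(2⁻¹ : K) • (J x - I x) := by
    rw [← hFinv₁ (-(2⁻¹ : K) • (J x - I x)), hb]
    simp
  have hdual : (J.dualMap - I.dualMap) ξ = -(2 : K) • b (Finv ξ) := by
    conv_lhs => rw [← hFinv₂ ξ]
    rw [← comp_apply, dualMap_sub_dualMap_comp hF h, hb]
    simp
  have hfst : (J - I) x - (ωJinv + ωIinv) (ξ - b x) = -(2 : K) • Finv ξ := by
    rw [hsum, LinearMap.smul_apply, LinearMap.sub_apply, map_sub, hFinv_b]
    module
  have hsnd := congr($(comp_add_comp_add_dualMap_sub_dualMap_comp hF h hI hJ hg hb) x)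
  rw [LinearMap.add_apply, comp_apply, LinearMap.smul_apply] at hsnd
  rw [hfst, Prod.smul_mk, map_sub (J.dualMap - I.dualMap), hdual, map_smul]
  refine Prod.ext ?_ ?_
  · dsimp only
    module
  · dsimp only
    linear_combination (norm := module) (2⁻¹ : K) • hsnd

end Field

theorem stmt6_general (V : Type*) [AddCommGroup V] [Module ℝ V]
    (I J : V →ₗ[ℝ] V) (F : V →ₗ[ℝ] Module.Dual ℝ V)
    (hI : I ∘ₗ I = -LinearMap.id) (hJ : J ∘ₗ J = -LinearMap.id)
    (hF : ∀ x y : V, F x y = - F y x)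
    (h2 : F ∘ₗ J + I.dualMap ∘ₗ F = 0)
    (g b ωI ωJ : V →ₗ[ℝ] Module.Dual ℝ V)
    (hg : g = -((2:ℝ)⁻¹) • (F ∘ₗ (I + J)))
    (hb : b = -((2:ℝ)⁻¹) • (F ∘ₗ (J - I)))
    (hωI : ωI = g ∘ₗ I) (hωJ : ωJ = g ∘ₗ J)
    (hpos : ∀ x : V, x ≠ 0 → 0 < g x x)
    -- inverses of F, ω_I, ω_J
    (Finv ωIinv ωJinv : Module.Dual ℝ V →ₗ[ℝ] V)
    (hFinv₁ : ∀ x : V, Finv (F x) = x) (hFinv₂ : ∀ ξ, F (Finv ξ) = ξ)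
    (hωIinv₂ : ∀ ξ, ωI (ωIinv ξ) = ξ)
    (hωJinv₂ : ∀ ξ, ωJ (ωJinv ξ) = ξ)
    -- the maps on V ⊕ V*
    (𝒥A eb enegb M : V × Module.Dual ℝ V → V × Module.Dual ℝ V)
    (h𝒥A : ∀ p : V × Module.Dual ℝ V, 𝒥A p = (-(Finv p.2), F p.1))
    (heb : ∀ p : V × Module.Dual ℝ V, eb p = (p.1, p.2 + b p.1))
    (henegb : ∀ p : V × Module.Dual ℝ V, enegb p = (p.1, p.2 - b p.1))
    (hM : ∀ p : V × Module.Dual ℝ V,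
      M p = ((J - I) p.1 - (ωJinv + ωIinv) p.2,
             (ωJ + ωI) p.1 - (J.dualMap - I.dualMap) p.2))
    (pr : V × Module.Dual ℝ V → V × Module.Dual ℝ V → ℝ)
    (hpr : ∀ p q : V × Module.Dual ℝ V, pr p q = (2:ℝ)⁻¹ * (p.2 q.1 + q.2 p.1)) :
    (∀ p : V × Module.Dual ℝ V, 𝒥A (𝒥A p) = -p) ∧
      (∀ p q : V × Module.Dual ℝ V, pr (𝒥A p) (𝒥A q) = pr p q) ∧
      (∀ p : V × Module.Dual ℝ V, 𝒥A p = (2:ℝ)⁻¹ • eb (M (enegb p))) := by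
  subst hωI hωJ
  have hsum : ωJinv + ωIinv = (2 : ℝ) • Finv :=
    add_eq_two_smul_of_rightInverse (injective_of_pos_apply_self hpos)
      (eq_comp_add_comp_of_comp_self_eq_neg hJ hg hb)
      (eq_comp_sub_comp_of_comp_self_eq_neg hI hg hb) hFinv₁ hFinv₂ hωJinv₂ hωIinv₂
  refine ⟨fun p => ?_, fun p q => ?_, fun ⟨x, ξ⟩ => ?_⟩
  · rw [h𝒥A, h𝒥A]
    ext <;> simp [hFinv₁, hFinv₂]
  · rw [hpr, hpr, h𝒥A, h𝒥A]
    simp only [map_neg, hF _ (Finv _), hFinv₂, neg_neg]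
    ring
  · rw [h𝒥A, henegb, hM, heb]
    exact (two_inv_smul_bTransform_conj_eq hF h2 hI hJ hg hb hFinv₁ hFinv₂ hsum x ξ).symm

/-- With `(I,J,Q,F)` satisfying the compatibility equations and
`g = -(1/2)F(I+J)` positive definite, the map `𝒥_A(X+ξ) = -F⁻¹ξ + FX` on `V ⊕ V*`
squares to `-1`, is orthogonal for the split pairing, and equals
`(1/2)·e^b ∘ (J-I, -(ω_J⁻¹+ω_I⁻¹); ω_J+ω_I, -(J*-I*)) ∘ e^{-b}`. -/
theorem stmt6 (V : Type*) [AddCommGroup V] [Module ℝ V] [FiniteDimensional ℝ V]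
    (I J : V →ₗ[ℝ] V) (Q : Module.Dual ℝ V →ₗ[ℝ] V) (F : V →ₗ[ℝ] Module.Dual ℝ V)
    (hI : I ∘ₗ I = -LinearMap.id) (hJ : J ∘ₗ J = -LinearMap.id)
    (hQ : ∀ ξ η : Module.Dual ℝ V, ξ (Q η) = - η (Q ξ))
    (hF : ∀ x y : V, F x y = - F y x)
    (h1 : J - I = Q ∘ₗ F)
    (h2 : F ∘ₗ J + I.dualMap ∘ₗ F = 0)
    (g b ωI ωJ : V →ₗ[ℝ] Module.Dual ℝ V)
    (hg : g = -((2:ℝ)⁻¹) • (F ∘ₗ (I + J)))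
    (hb : b = -((2:ℝ)⁻¹) • (F ∘ₗ (J - I)))
    (hωI : ωI = g ∘ₗ I) (hωJ : ωJ = g ∘ₗ J)
    (hpos : ∀ x : V, x ≠ 0 → 0 < g x x)
    -- inverses of F, ω_I, ω_J
    (Finv ωIinv ωJinv : Module.Dual ℝ V →ₗ[ℝ] V)
    (hFinv₁ : ∀ x : V, Finv (F x) = x) (hFinv₂ : ∀ ξ, F (Finv ξ) = ξ)
    (hωIinv₁ : ∀ x : V, ωIinv (ωI x) = x) (hωIinv₂ : ∀ ξ, ωI (ωIinv ξ) = ξ)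
    (hωJinv₁ : ∀ x : V, ωJinv (ωJ x) = x) (hωJinv₂ : ∀ ξ, ωJ (ωJinv ξ) = ξ)
    -- the maps on V ⊕ V*
    (𝒥A eb enegb M : V × Module.Dual ℝ V → V × Module.Dual ℝ V)
    (h𝒥A : ∀ p : V × Module.Dual ℝ V, 𝒥A p = (-(Finv p.2), F p.1))
    (heb : ∀ p : V × Module.Dual ℝ V, eb p = (p.1, p.2 + b p.1))
    (henegb : ∀ p : V × Module.Dual ℝ V, enegb p = (p.1, p.2 - b p.1))
    (hM : ∀ p : V × Module.Dual ℝ V,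
      M p = ((J - I) p.1 - (ωJinv + ωIinv) p.2,
             (ωJ + ωI) p.1 - (J.dualMap - I.dualMap) p.2))
    (pr : V × Module.Dual ℝ V → V × Module.Dual ℝ V → ℝ)
    (hpr : ∀ p q : V × Module.Dual ℝ V, pr p q = (2:ℝ)⁻¹ * (p.2 q.1 + q.2 p.1)) :
    (∀ p : V × Module.Dual ℝ V, 𝒥A (𝒥A p) = -p) ∧
      (∀ p q : V × Module.Dual ℝ V, pr (𝒥A p) (𝒥A q) = pr p q) ∧
      (∀ p : V × Module.Dual ℝ V, 𝒥A p = (2:ℝ)⁻¹ • eb (M (enegb p))) :=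
  stmt6_general V I J F hI hJ hF h2 g b ωI ωJ hg hb hωI hωJ hpos Finv ωIinv ωJinv hFinv₁ hFinv₂
    hωIinv₂ hωJinv₂ 𝒥A eb enegb M h𝒥A heb henegb hM pr hpr
end

section
/- Let 𝒥 : E → E be an orthogonal almost complex structure on a Courant algebroid E, and D a generalized connection on E with D𝒥 = 0 whose torsion T_D is of type (2,1)+(1,2) with respect to 𝒥 (equivalently T_D(𝒥x,𝒥y,z) + T_D(𝒥x,y,𝒥z) + T_D(x,𝒥y,𝒥z) + T_D(x,y,z) = 0 for all x,y,z). Then the Nijenhuis tensor N_𝒥(x,y) = [𝒥x,𝒥y] - 𝒥[𝒥x,y] - 𝒥[x,𝒥y] - [x,y] (with skew-symmetrized brackets) vanishes identically. -/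
/-!
Because `D` commutes with `𝒥` and `𝒥` is orthogonal, the connection terms cancel in pairs when
the torsion is expanded, leaving
`⟨N(a,b),c⟩ = T(a,b,c) - T(𝒥a,𝒥b,c) - T(𝒥a,b,𝒥c) - T(a,𝒥b,𝒥c)`,
which the type condition turns into `⟨N(a,b),c⟩ = 2 T(a,b,c)`. Feeding this into the four terms
of the type condition and using `N(𝒥x,𝒥y) = -N(x,y)`, `N(𝒥x,y) = N(x,𝒥y) = -𝒥 N(x,y)` gives
`-2 ⟨N(x,y),z⟩ = 0`, and the pairing is nondegenerate.
-/

section Nijenhuis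

variable {E F : Type*} [AddCommGroup E] [FunLike F E E] [AddMonoidHomClass F E E]

def nijenhuis (bracket : E → E → E) (J : F) (x y : E) : E :=
  bracket (J x) (J y) - J (bracket (J x) y) - J (bracket x (J y)) - bracket x y

variable {bracket : E → E → E} {J : F}

theorem nijenhuis_map_left (hadd : ∀ a b c, bracket (a + b) c = bracket a c + bracket b c)
    (hJ2 : ∀ a, J (J a) = -a) (x y : E) :
    nijenhuis bracket J (J x) y = -J (nijenhuis bracket J x y) := by
  have hneg : ∀ a b, bracket (-a) b = -bracket a b := fun a b =>
    (AddMonoidHom.mk' (bracket · b) (hadd · · b)).map_neg a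
  simp only [nijenhuis, hJ2, hneg, map_sub, map_neg]
  abel

theorem nijenhuis_swap (hskew : ∀ a b, bracket a b = -bracket b a) (x y : E) :
    nijenhuis bracket J y x = -nijenhuis bracket J x y := by
  simp only [nijenhuis, hskew y, hskew (J y), map_neg]
  abel

theorem nijenhuis_map_right (hadd : ∀ a b c, bracket (a + b) c = bracket a c + bracket b c)
    (hskew : ∀ a b, bracket a b = -bracket b a) (hJ2 : ∀ a, J (J a) = -a) (x y : E) :
    nijenhuis bracket J x (J y) = -J (nijenhuis bracket J x y) := by
  rw [nijenhuis_swap hskew (J y) x, nijenhuis_map_left hadd hJ2, nijenhuis_swap hskew x y]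
  simp only [map_neg, neg_neg]

theorem nijenhuis_map_map (hadd : ∀ a b c, bracket (a + b) c = bracket a c + bracket b c)
    (hskew : ∀ a b, bracket a b = -bracket b a) (hJ2 : ∀ a, J (J a) = -a) (x y : E) :
    nijenhuis bracket J (J x) (J y) = -nijenhuis bracket J x y := by
  rw [nijenhuis_map_right hadd hskew hJ2, nijenhuis_map_left hadd hJ2, map_neg, hJ2, neg_neg]

end Nijenhuis

section Pairing

variable {E G : Type*} [AddCommGroup E] [AddCommGroup G] {ip : E → E → G} {J : E → E}

theorem pairing_map_left (hadd : ∀ a b c, ip (a + b) c = ip a c + ip b c)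
    (hJ2 : ∀ a, J (J a) = -a) (hJorth : ∀ a b, ip (J a) (J b) = ip a b) (a b : E) :
    ip (J a) b = -ip a (J b) := by
  rw [← hJorth (J a) b, hJ2]
  exact (AddMonoidHom.mk' (ip · (J b)) (hadd · · (J b))).map_neg a

theorem pairing_map_map_right (hadd : ∀ a b c, ip (a + b) c = ip a c + ip b c)
    (hJ2 : ∀ a, J (J a) = -a) (hJorth : ∀ a b, ip (J a) (J b) = ip a b) (a b : E) :
    ip a (J (J b)) = -ip a b := by
  rw [← hJorth a b, pairing_map_left hadd hJ2 hJorth, neg_neg]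

end Pairing

noncomputable def torsion {E : Type*} [AddCommGroup E] (ip : E → E → ℝ) (bracket D : E → E → E)
    (a b c : E) : ℝ :=
  ip (D a b - D b a - bracket a b) c + (2:ℝ)⁻¹ * (ip (D c a) b - ip (D c b) a)

theorem pairing_nijenhuis_eq_torsion {E F : Type*} [AddCommGroup E] [FunLike F E E]
    [AddMonoidHomClass F E E] {ip : E → E → ℝ} {bracket D : E → E → E} {J : F}
    (hadd : ∀ a b c, ip (a + b) c = ip a c + ip b c) (hJ2 : ∀ a, J (J a) = -a)
    (hJorth : ∀ a b, ip (J a) (J b) = ip a b) (hDJ : ∀ a b, D a (J b) = J (D a b)) (a b c : E) :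
    ip (nijenhuis bracket J a b) c = torsion ip bracket D a b c
      - (torsion ip bracket D (J a) (J b) c + torsion ip bracket D (J a) b (J c)
        + torsion ip bracket D a (J b) (J c)) := by
  have hsub : ∀ a b c, ip (a - b) c = ip a c - ip b c := fun a b c =>
    (AddMonoidHom.mk' (ip · c) (hadd · · c)).map_sub a b
  simp only [nijenhuis, torsion, hsub, hDJ, pairing_map_left hadd hJ2 hJorth,
    pairing_map_map_right hadd hJ2 hJorth]
  ring

theorem stmt14_general (E : Type*) [AddCommGroup E] [Module ℝ E]
    (ip : E → E → ℝ) (bracket : E → E → E) (D : E → E → E) (J : E →ₗ[ℝ] E)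
    -- pairing: symmetric, bilinear, nondegenerate
    (hipadd : ∀ a b c, ip (a + b) c = ip a c + ip b c)
    (hipnondeg : ∀ a, (∀ b, ip a b = 0) → a = 0)
    -- the skew-symmetrized Courant bracket
    (hbrskew : ∀ a b, bracket a b = - bracket b a)
    (hbradd : ∀ a b c, bracket (a + b) c = bracket a c + bracket b c)
    -- 𝒥 is an orthogonal almost complex structure
    (hJ2 : ∀ a, J (J a) = -a)
    (hJorth : ∀ a b, ip (J a) (J b) = ip a b)
    -- D𝒥 = 0
    (hDJ : ∀ a b, D a (J b) = J (D a b))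
    -- the torsion of D
    (T : E → E → E → ℝ)
    (hT : ∀ a b c, T a b c
      = ip (D a b - D b a - bracket a b) c
        + (2:ℝ)⁻¹ * (ip (D c a) b - ip (D c b) a))
    -- T_D is of type (2,1)+(1,2)
    (htype : ∀ x y z,
      T (J x) (J y) z + T (J x) y (J z) + T x (J y) (J z) + T x y z = 0) :
    ∀ x y, bracket (J x) (J y) - J (bracket (J x) y) - J (bracket x (J y))
      - bracket x y = 0 := by
  obtain rfl : T = torsion ip bracket D := funext fun a => funext fun b => funext fun c => hT a b c
  have hN : ∀ a b c, ip (nijenhuis bracket J a b) c = 2 * torsion ip bracket D a b c :=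
    fun a b c => by
      linarith [htype a b c,
        pairing_nijenhuis_eq_torsion (bracket := bracket) hipadd hJ2 hJorth hDJ a b c]
  have hneg : ∀ a c, ip (-a) c = -ip a c := fun a c =>
    (AddMonoidHom.mk' (ip · c) (hipadd · · c)).map_neg a
  intro x y
  refine hipnondeg _ fun z => ?_
  change ip (nijenhuis bracket J x y) z = 0
  have hJJ : ip (nijenhuis bracket J (J x) (J y)) z = -ip (nijenhuis bracket J x y) z := by
    rw [nijenhuis_map_map hbradd hbrskew hJ2, hneg]
  have hJl : ip (nijenhuis bracket J (J x) y) (J z) = -ip (nijenhuis bracket J x y) z := by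
    rw [nijenhuis_map_left hbradd hJ2, hneg, hJorth]
  have hJr : ip (nijenhuis bracket J x (J y)) (J z) = -ip (nijenhuis bracket J x y) z := by
    rw [nijenhuis_map_right hbradd hbrskew hJ2, hneg, hJorth]
  linarith [htype x y z, hN (J x) (J y) z, hN (J x) y (J z), hN x (J y) (J z), hN x y z]

theorem stmt14 (E : Type*) [AddCommGroup E] [Module ℝ E]
    (ip : E → E → ℝ) (bracket : E → E → E) (D : E → E → E) (J : E →ₗ[ℝ] E)
    -- pairing: symmetric, bilinear, nondegenerate
    (hipsymm : ∀ a b, ip a b = ip b a)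
    (hipadd : ∀ a b c, ip (a + b) c = ip a c + ip b c)
    (hiplin : ∀ (r : ℝ) a b, ip (r • a) b = r * ip a b)
    (hipnondeg : ∀ a, (∀ b, ip a b = 0) → a = 0)
    -- the skew-symmetrized Courant bracket
    (hbrskew : ∀ a b, bracket a b = - bracket b a)
    (hbradd : ∀ a b c, bracket (a + b) c = bracket a c + bracket b c)
    -- 𝒥 is an orthogonal almost complex structure
    (hJ2 : ∀ a, J (J a) = -a)
    (hJorth : ∀ a b, ip (J a) (J b) = ip a b)
    -- D is linear and preserves the pairing along itself
    (hDadd : ∀ a a' b, D (a + a') b = D a b + D a' b)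
    (hDadd' : ∀ a b b', D a (b + b') = D a b + D a b')
    -- D𝒥 = 0
    (hDJ : ∀ a b, D a (J b) = J (D a b))
    -- the torsion of D
    (T : E → E → E → ℝ)
    (hT : ∀ a b c, T a b c
      = ip (D a b - D b a - bracket a b) c
        + (2:ℝ)⁻¹ * (ip (D c a) b - ip (D c b) a))
    -- T_D is of type (2,1)+(1,2)
    (htype : ∀ x y z,
      T (J x) (J y) z + T (J x) y (J z) + T x (J y) (J z) + T x y z = 0) :
    ∀ x y, bracket (J x) (J y) - J (bracket (J x) y) - J (bracket x (J y))
      - bracket x y = 0 :=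
  stmt14_general E ip bracket D J hipadd hipnondeg hbrskew hbradd hJ2 hJorth hDJ T hT htype
end

section
/- Let (I, J, Q, F) satisfy J - I = Q∘F and F∘J + I*∘F = 0 pointwise on a manifold M, with F a closed 2-form and g = -(1/2)F(I+J) positive definite. Then with b = -(1/2)F(J-I), the subbundles L₊ = {X - i F(X) : X ∈ T^{1,0}_J} and L₋ = {X + i F(X) : X ∈ T^{1,0}_I} of (T ⊕ T*) ⊗ ℂ are involutive for the (untwisted) Courant bracket whenever I and J are integrable complex structures, since i_Y i_X dF = 0. -/
/-! The one-form part of the Courant bracket of `X + i_X B` and `Y + i_Y B` is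
`i_{[X,Y]} B + i_Y i_X dB`, so the graph of a closed 2-form `B` over a Lie-involutive
distribution is again involutive. Both `L₊` and `L₋` are such graphs, for the closed
forms `B = ∓ i F` over `T^{1,0}_J` and `T^{1,0}_I`. -/

section GraphOfClosedForm

variable {R A : Type*} [CommRing R] [CommRing A] [Algebra R A]

theorem Derivation.map_algebraMap_mul (X : Derivation R A A) (c : R) (t : A) :
    X (algebraMap R A c * t) = algebraMap R A c * X t := by
  rw [← Algebra.smul_def, map_smul, Algebra.smul_def]

theorem courant_graph_of_closed {F : Derivation R A A → Derivation R A A → A}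
    (hskew : ∀ X Y, F X Y = - F Y X)
    (hclosed : ∀ X Y Z, X (F Y Z) - Y (F X Z) + Z (F X Y)
        - F ⁅X, Y⁆ Z + F ⁅X, Z⁆ Y - F ⁅Y, Z⁆ X = 0)
    (X Y Z : Derivation R A A) :
    X (F Y Z) - F Y ⁅X, Z⁆ - (Y (F X Z) - Z (F X Y) - F X ⁅Y, Z⁆) = F ⁅X, Y⁆ Z := by
  linear_combination hclosed X Y Z - hskew ⁅X, Z⁆ Y + hskew ⁅Y, Z⁆ X

theorem closed_algebraMap_mul {F : Derivation R A A → Derivation R A A → A}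
    (hclosed : ∀ X Y Z, X (F Y Z) - Y (F X Z) + Z (F X Y)
        - F ⁅X, Y⁆ Z + F ⁅X, Z⁆ Y - F ⁅Y, Z⁆ X = 0) (c : R) (X Y Z : Derivation R A A) :
    X (algebraMap R A c * F Y Z) - Y (algebraMap R A c * F X Z)
        + Z (algebraMap R A c * F X Y) - algebraMap R A c * F ⁅X, Y⁆ Z
        + algebraMap R A c * F ⁅X, Z⁆ Y - algebraMap R A c * F ⁅Y, Z⁆ X = 0 := by
  simp only [Derivation.map_algebraMap_mul]
  linear_combination algebraMap R A c * hclosed X Y Z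

end GraphOfClosedForm

theorem stmt15_general (A : Type*) [CommRing A] [Algebra ℂ A]
    (I J : Derivation ℂ A A → Derivation ℂ A A)
    (F : Derivation ℂ A A → Derivation ℂ A A → A)
    -- F is a 2-form
    (hFskew : ∀ X Y, F X Y = - F Y X)
    -- ... which is closed: dF = 0
    (hFclosed : ∀ X Y Z,
      X (F Y Z) - Y (F X Z) + Z (F X Y)
        - F ⁅X, Y⁆ Z + F ⁅X, Z⁆ Y - F ⁅Y, Z⁆ X = 0)
    -- integrability of I and J: T^{1,0} is closed under the Lie bracket
    (hIint : ∀ X Y, I X = algebraMap ℂ A Complex.I • X →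
      I Y = algebraMap ℂ A Complex.I • Y → I ⁅X, Y⁆ = algebraMap ℂ A Complex.I • ⁅X, Y⁆)
    (hJint : ∀ X Y, J X = algebraMap ℂ A Complex.I • X →
      J Y = algebraMap ℂ A Complex.I • Y → J ⁅X, Y⁆ = algebraMap ℂ A Complex.I • ⁅X, Y⁆) :
    -- L₊ is involutive:
    (∀ X Y, J X = algebraMap ℂ A Complex.I • X → J Y = algebraMap ℂ A Complex.I • Y →
      J ⁅X, Y⁆ = algebraMap ℂ A Complex.I • ⁅X, Y⁆ ∧
      ∀ Z, X (-(algebraMap ℂ A Complex.I * F Y Z))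
          - (-(algebraMap ℂ A Complex.I * F Y ⁅X, Z⁆))
          - (Y (-(algebraMap ℂ A Complex.I * F X Z))
              - Z (-(algebraMap ℂ A Complex.I * F X Y))
              - (-(algebraMap ℂ A Complex.I * F X ⁅Y, Z⁆)))
        = -(algebraMap ℂ A Complex.I * F ⁅X, Y⁆ Z)) ∧
    -- and L₋ is involutive:
    (∀ X Y, I X = algebraMap ℂ A Complex.I • X → I Y = algebraMap ℂ A Complex.I • Y →
      I ⁅X, Y⁆ = algebraMap ℂ A Complex.I • ⁅X, Y⁆ ∧
      ∀ Z, X (algebraMap ℂ A Complex.I * F Y Z)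
          - (algebraMap ℂ A Complex.I * F Y ⁅X, Z⁆)
          - (Y (algebraMap ℂ A Complex.I * F X Z)
              - Z (algebraMap ℂ A Complex.I * F X Y)
              - (algebraMap ℂ A Complex.I * F X ⁅Y, Z⁆))
        = algebraMap ℂ A Complex.I * F ⁅X, Y⁆ Z) := by
  have graph (c : ℂ) := courant_graph_of_closed (F := fun X Y => algebraMap ℂ A c * F X Y)
    (fun X Y => by rw [hFskew, mul_neg]) (closed_algebraMap_mul hFclosed c)
  refine ⟨fun X Y hX hY => ⟨hJint X Y hX hY, fun Z => ?_⟩,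
    fun X Y hX hY => ⟨hIint X Y hX hY, graph Complex.I X Y⟩⟩
  simpa only [map_neg, neg_mul] using graph (-Complex.I) X Y Z

theorem stmt15 (A : Type*) [CommRing A] [Algebra ℂ A]
    (I J : Derivation ℂ A A → Derivation ℂ A A)
    (Q : (Derivation ℂ A A → A) → Derivation ℂ A A)
    (F : Derivation ℂ A A → Derivation ℂ A A → A)
    -- I, J are (complexified) complex structure tensors
    (hI2 : ∀ X, I (I X) = -X) (hJ2 : ∀ X, J (J X) = -X)
    (hIlin : ∀ (a : A) X, I (a • X) = a • I X)
    (hJlin : ∀ (a : A) X, J (a • X) = a • J X)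
    (hIadd : ∀ X Y, I (X + Y) = I X + I Y)
    (hJadd : ∀ X Y, J (X + Y) = J X + J Y)
    -- F is a 2-form
    (hFskew : ∀ X Y, F X Y = - F Y X)
    (hFadd : ∀ X X' Y, F (X + X') Y = F X Y + F X' Y)
    (hFlin : ∀ (a : A) X Y, F (a • X) Y = a * F X Y)
    -- ... which is closed: dF = 0
    (hFclosed : ∀ X Y Z,
      X (F Y Z) - Y (F X Z) + Z (F X Y)
        - F ⁅X, Y⁆ Z + F ⁅X, Z⁆ Y - F ⁅Y, Z⁆ X = 0)
    -- Q is a skew bivector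
    (hQskew : ∀ ξ η : Derivation ℂ A A → A, ξ (Q η) = - η (Q ξ))
    -- the algebraic relations:  J - I = Q∘F  and  F∘J + I*∘F = 0
    (hJI : ∀ X, J X - I X = Q (fun Z => F X Z))
    (hFJ : ∀ X Y, F (J X) Y + F X (I Y) = 0)
    -- integrability of I and J: T^{1,0} is closed under the Lie bracket
    (hIint : ∀ X Y, I X = algebraMap ℂ A Complex.I • X →
      I Y = algebraMap ℂ A Complex.I • Y → I ⁅X, Y⁆ = algebraMap ℂ A Complex.I • ⁅X, Y⁆)
    (hJint : ∀ X Y, J X = algebraMap ℂ A Complex.I • X →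
      J Y = algebraMap ℂ A Complex.I • Y → J ⁅X, Y⁆ = algebraMap ℂ A Complex.I • ⁅X, Y⁆) :
    -- L₊ is involutive:
    (∀ X Y, J X = algebraMap ℂ A Complex.I • X → J Y = algebraMap ℂ A Complex.I • Y →
      J ⁅X, Y⁆ = algebraMap ℂ A Complex.I • ⁅X, Y⁆ ∧
      ∀ Z, X (-(algebraMap ℂ A Complex.I * F Y Z))
          - (-(algebraMap ℂ A Complex.I * F Y ⁅X, Z⁆))
          - (Y (-(algebraMap ℂ A Complex.I * F X Z))
              - Z (-(algebraMap ℂ A Complex.I * F X Y))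
              - (-(algebraMap ℂ A Complex.I * F X ⁅Y, Z⁆)))
        = -(algebraMap ℂ A Complex.I * F ⁅X, Y⁆ Z)) ∧
    -- and L₋ is involutive:
    (∀ X Y, I X = algebraMap ℂ A Complex.I • X → I Y = algebraMap ℂ A Complex.I • Y →
      I ⁅X, Y⁆ = algebraMap ℂ A Complex.I • ⁅X, Y⁆ ∧
      ∀ Z, X (algebraMap ℂ A Complex.I * F Y Z)
          - (algebraMap ℂ A Complex.I * F Y ⁅X, Z⁆)
          - (Y (algebraMap ℂ A Complex.I * F X Z)
              - Z (algebraMap ℂ A Complex.I * F X Y)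
              - (algebraMap ℂ A Complex.I * F X ⁅Y, Z⁆))
        = algebraMap ℂ A Complex.I * F ⁅X, Y⁆ Z) :=
  stmt15_general A I J F hFskew hFclosed hIint hJint
end

section
/- Flow construction identity: let I_t be a smooth family of complex-structure tensors and F_t a smooth family of 2-forms on a manifold satisfying the ODEs İ_t = Q∘F_t and the initial conditions G_0 = 0 where G_t := ∫₀ᵗ F_s ds, with Q a fixed skew map, İ_t* = (İ_t)* and Ġ_t = F_t. Suppose additionally F_t∘I_t + I_t*∘F_t = 0 for all t (each F_t is (1,1) for I_t). Then G_t∘I_t + I_0*∘G_t = 0 for all t; in particular, setting F̄_t = t⁻¹G_t, the pair (I_0, I_t) with 2-form t·F̄_t = G_t solves J - I = Q∘G and G∘J + I*∘G = 0 with I = I_0, J = I_t. -/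
set_option maxHeartbeats 1000000
set_option synthInstance.maxHeartbeats 1000000


/-!  STATEMENT 19 (flow construction identity):  Let `I_t` be a family of complex
structure tensors and `F_t` a family of skew forms with `İ_t = Q∘F_t`, each `F_t` of
type `(1,1)` for `I_t` (`F_t∘I_t + I_t*∘F_t = 0`), `Q` fixed and skew, and
`G_t = ∫₀ᵗ F_s ds`.  Then `G_t∘I_t + I_0*∘G_t = 0` for all `t`, and
`I_t - I_0 = Q∘G_t`; so `(I, J, Q, G) = (I_0, I_t, Q, G_t)` solves
`J - I = Q∘G` and `G∘J + I*∘G = 0`. -/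

theorem stmt19 (V : Type*) [NormedAddCommGroup V] [NormedSpace ℝ V]
    [FiniteDimensional ℝ V]
    (I : ℝ → V →L[ℝ] V)
    (Q : (V →L[ℝ] ℝ) →L[ℝ] V)
    (F : ℝ → V →L[ℝ] (V →L[ℝ] ℝ))
    (G : ℝ → V →L[ℝ] (V →L[ℝ] ℝ))
    (hFcont : Continuous F)
    -- each I_t is a complex structure
    (hI2 : ∀ t, (I t).comp (I t) = - ContinuousLinearMap.id ℝ V)
    -- Q and each F_t are skew
    (hQskew : ∀ ξ η : V →L[ℝ] ℝ, ξ (Q η) = - η (Q ξ))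
    (hFskew : ∀ t (x y : V), F t x y = - F t y x)
    -- the flow equation  İ_t = Q ∘ F_t
    (hderiv : ∀ t, HasDerivAt I (Q.comp (F t)) t)
    -- each F_t is (1,1) with respect to I_t:  F_t∘I_t + I_t*∘F_t = 0
    (h11 : ∀ t (x y : V), F t (I t x) y + F t x (I t y) = 0)
    -- G_t = ∫₀ᵗ F_s ds
    (hG : ∀ t, G t = ∫ s in (0:ℝ)..t, F s) :
    -- conclusion:  I_t - I_0 = Q∘G_t  and  G_t∘I_t + I_0*∘G_t = 0
    (∀ t, I t - I 0 = Q.comp (G t)) ∧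
    (∀ t (x y : V), G t (I t x) y + G t x (I 0 y) = 0) := by
  -- integrability of F
  have hFint : ∀ a b : ℝ, @IntervalIntegrable _ PseudoMetricSpace.toUniformSpace.toTopologicalSpace
      NormedAddGroup.toENormedAddMonoid F MeasureTheory.volume a b :=
    fun a b => Continuous.intervalIntegrable (E := V →L[ℝ] V →L[ℝ] ℝ) hFcont a b
  -- G has derivative F t
  have hGderiv : ∀ t, HasDerivAt G (F t) t := by
    intro t
    have h := intervalIntegral.integral_hasStrictDerivAt_right (E := V →L[ℝ] V →L[ℝ] ℝ)
      (hFint 0 t) (hFcont.stronglyMeasurableAtFilter _ _) hFcont.continuousAt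
    have : HasDerivAt (fun u => ∫ s in (0:ℝ)..u, F s) (F t) t := h.hasDerivAt
    exact this.congr_of_eventuallyEq (Filter.Eventually.of_forall fun u => (hG u))
  have hG0 : G 0 = 0 := by rw [hG 0, intervalIntegral.integral_same]
  -- Part 1
  have part1 : ∀ t, I t - I 0 = Q.comp (G t) := by
    intro t
    have hFI : IntervalIntegrable (fun s => Q.comp (F s)) MeasureTheory.volume 0 t :=
      (((ContinuousLinearMap.compL ℝ V (V →L[ℝ] ℝ) V Q).continuous).comp
        hFcont).intervalIntegrable 0 t
    have heq := intervalIntegral.integral_eq_sub_of_hasDerivAt (fun s _ => hderiv s) hFI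
    have hcomm : (∫ s in (0:ℝ)..t, Q.comp (F s)) = Q.comp (G t) := by
      ext x
      have hintx : IntervalIntegrable (fun s => F s x) MeasureTheory.volume 0 t :=
        ((ContinuousLinearMap.apply ℝ (V →L[ℝ] ℝ) x).continuous.comp
          hFcont).intervalIntegrable 0 t
      have l1 : (∫ s in (0:ℝ)..t, Q.comp (F s)) x = ∫ s in (0:ℝ)..t, Q (F s x) :=
        ContinuousLinearMap.intervalIntegral_apply hFI x
      have l2 : G t x = ∫ s in (0:ℝ)..t, F s x := by
        rw [hG t]; exact ContinuousLinearMap.intervalIntegral_apply (hFint 0 t) x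
      have l3 : (∫ s in (0:ℝ)..t, Q (F s x)) = Q (∫ s in (0:ℝ)..t, F s x) :=
        ContinuousLinearMap.intervalIntegral_comp_comm Q hintx
      simp [l1, l3, l2]
    rw [← heq, hcomm]
  refine ⟨part1, ?_⟩
  -- skewness of G
  have hGskew : ∀ t (x y : V), G t x y = - G t y x := by
    intro t x y
    have hax : ∀ z : V, G t z = ∫ s in (0:ℝ)..t, F s z := by
      intro z
      rw [hG t]
      exact ContinuousLinearMap.intervalIntegral_apply (hFint 0 t) z
    have hint : ∀ z : V, IntervalIntegrable (fun s => F s z) MeasureTheory.volume 0 t :=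
      fun z => ((ContinuousLinearMap.apply ℝ (V →L[ℝ] ℝ) z).continuous.comp
        hFcont).intervalIntegrable 0 t
    have haxy : ∀ z w : V, G t z w = ∫ s in (0:ℝ)..t, F s z w := by
      intro z w
      rw [hax z]
      exact ContinuousLinearMap.intervalIntegral_apply (hint z) w
    rw [haxy x y, haxy y x, ← intervalIntegral.integral_neg]
    exact intervalIntegral.integral_congr fun s _ => hFskew s x y
  -- Part 2
  intro t x y
  set H : ℝ → ℝ := fun t => G t (I t x) y + G t x (I 0 y) with hH
  have hHderiv : ∀ u, HasDerivAt H 0 u := by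
    intro u
    have hIx : HasDerivAt (fun u => I u x) ((Q.comp (F u)) x) u := by
      simpa using (hderiv u).clm_apply (hasDerivAt_const u x)
    have h1 : HasDerivAt (fun u => G u (I u x)) (F u (I u x) + G u (Q.comp (F u) x)) u :=
      (hGderiv u).clm_apply hIx
    have h1' : HasDerivAt (fun u => G u (I u x) y)
        (F u (I u x) y + G u (Q.comp (F u) x) y) u := by
      have := h1.clm_apply (hasDerivAt_const u y)
      simpa using this
    have h2 : HasDerivAt (fun u => G u x (I 0 y)) (F u x (I 0 y)) u := by
      have := ((hGderiv u).clm_apply (hasDerivAt_const u x)).clm_apply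
        (hasDerivAt_const u (I 0 y))
      simpa using this
    have key : F u (I u x) y + G u (Q.comp (F u) x) y + F u x (I 0 y) = 0 := by
      have e1 : F u (I u x) y = - F u x (I u y) := by linarith [h11 u x y]
      have e2 : I u y - I 0 y = Q (G u y) := by
        have := part1 u
        calc I u y - I 0 y = (I u - I 0) y := by simp
          _ = Q (G u y) := by rw [this]; rfl
      have e3 : F u x (I u y) = F u x (I 0 y) + F u x (Q (G u y)) := by
        have : I u y = I 0 y + Q (G u y) := by rw [← e2]; abel
        rw [this]; simp
      have e4 : F u x (Q (G u y)) = - G u y (Q (F u x)) := hQskew (F u x) (G u y)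
      have e5 : G u (Q (F u x)) y = - G u y (Q (F u x)) := hGskew u _ _
      have e6 : G u (Q.comp (F u) x) y = G u (Q (F u x)) y := rfl
      rw [e1, e3, e4, e6, e5]; ring
    have := h1'.add h2
    rw [show (F u (I u x) y + G u ((Q.comp (F u)) x) y + F u x (I 0 y)) = 0 from key] at this
    exact this
  have hconst : H t = H 0 := by
    have hdiff : Differentiable ℝ H := fun u => (hHderiv u).differentiableAt
    have hd0 : ∀ u, deriv H u = 0 := fun u => (hHderiv u).deriv
    exact is_const_of_deriv_eq_zero hdiff hd0 t 0
  simpa [hH, hG0] using hconst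
end
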